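/- arXiv:2401.09202 — 9 statements merged into one kernel-verified Lean document; each statement's English description precedes it below -/
import Mathlib

section
/- Let C be an orientation of a cycle of odd length that is not a directed cycle (i.e., not all arcs consistently oriented). Then C admits a decomposition into a 2-bounded directed linear forest and a directed matching. -/
open Finset

/-- Number of arcs of `F` entering `v` (in-degree). -/
def inDeg {V : Type*} [DecidableEq V] (F : Finset (V × V)) (v : V) : ℕ :=
  (F.filter (fun a => a.2 = v)).card

/-- Number of arcs of `F` leaving `v` (out-degree). -/
def outDeg {V : Type*} [DecidableEq V] (F : Finset (V × V)) (v : V) : ℕ :=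
  (F.filter (fun a => a.1 = v)).card

/-- A directed matching: every vertex is incident to at most one arc. -/
def IsDirectedMatching {V : Type*} [DecidableEq V] (F : Finset (V × V)) : Prop :=
  ∀ v, inDeg F v + outDeg F v ≤ 1

/-- A directed linear forest: in- and out-degrees at most one and no directed cycle. -/
def IsDLF {V : Type*} [DecidableEq V] (F : Finset (V × V)) : Prop :=
  (∀ v, inDeg F v ≤ 1) ∧ (∀ v, outDeg F v ≤ 1) ∧
    ∀ v : V, ¬ Relation.TransGen (fun u w => (u, w) ∈ F) v v

/-- `F` contains a directed walk with `n` arcs. -/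
def HasWalkOfLength {V : Type*} (F : Finset (V × V)) (n : ℕ) : Prop :=
  ∃ w : ℕ → V, ∀ i < n, (w i, w (i + 1)) ∈ F

/-- A `k`-bounded directed linear forest: each component path has at most `k` arcs. -/
def IsBoundedDLF {V : Type*} [DecidableEq V] (F : Finset (V × V)) (k : ℕ) : Prop :=
  IsDLF F ∧ ¬ HasWalkOfLength F (k + 1)

/-- Two arcs conflict if they share a vertex which is not the tail of both of them. -/
def ArcConflict {V : Type*} (a b : V × V) : Prop :=
  ∃ v, (v = a.1 ∨ v = a.2) ∧ (v = b.1 ∨ v = b.2) ∧ ¬(v = a.1 ∧ v = b.1)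

/-- An out-galaxy: a vertex-disjoint union of out-stars, i.e. no two distinct arcs
share a vertex that is not the tail of both. -/
def IsOutGalaxy {V : Type*} (F : Finset (V × V)) : Prop :=
  ∀ a ∈ F, ∀ b ∈ F, a ≠ b → ¬ ArcConflict a b

/-- A `k`-bounded out-galaxy: each out-star has at most `k` arcs. -/
def IsBoundedOutGalaxy {V : Type*} [DecidableEq V] (F : Finset (V × V)) (k : ℕ) : Prop :=
  IsOutGalaxy F ∧ ∀ v, outDeg F v ≤ k

/-!
Arc `i` of the cycle joins `i` and `i + 1`. Since the orientation changes an even number of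
times around the cycle and `r` is odd, there is a `u` with `o u = o (u + 1)`. Put the arcs
`u + 2, u + 4, …, u + r - 1` into the matching: no two of them are consecutive, every three
consecutive arcs contain one of them, and the only two consecutive arcs both left out are `u`
and `u + 1`, which are oriented alike. So the remaining arcs have in- and out-degree at most
one and contain no directed walk with three arcs.
-/

section Digraph

variable {ι V : Type*}

lemma inDeg_image_le_one [DecidableEq V] {s : Finset ι} {g : ι → V × V}
    (h : Set.InjOn (fun i => (g i).2) s) (v : V) : inDeg (s.image g) v ≤ 1 := by
  refine Finset.card_le_one.mpr ?_
  simp only [mem_filter, mem_image]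
  rintro _ ⟨⟨i, hi, rfl⟩, hiv⟩ _ ⟨⟨j, hj, rfl⟩, hjv⟩
  rw [h hi hj (hiv.trans hjv.symm)]

lemma outDeg_image_le_one [DecidableEq V] {s : Finset ι} {g : ι → V × V}
    (h : Set.InjOn (fun i => (g i).1) s) (v : V) : outDeg (s.image g) v ≤ 1 := by
  refine Finset.card_le_one.mpr ?_
  simp only [mem_filter, mem_image]
  rintro _ ⟨⟨i, hi, rfl⟩, hiv⟩ _ ⟨⟨j, hj, rfl⟩, hjv⟩
  rw [h hi hj (hiv.trans hjv.symm)]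

lemma isDirectedMatching_image [DecidableEq V] {s : Finset ι} {g : ι → V × V}
    (hloop : ∀ i ∈ s, (g i).1 ≠ (g i).2)
    (hsep : ∀ i ∈ s, ∀ j ∈ s, ∀ v, (v = (g i).1 ∨ v = (g i).2) →
      (v = (g j).1 ∨ v = (g j).2) → i = j) :
    IsDirectedMatching (s.image g) := by
  intro v
  have hdisj : Disjoint ((s.image g).filter (·.2 = v)) ((s.image g).filter (·.1 = v)) := by
    refine Finset.disjoint_filter.mpr ?_
    simp only [mem_image]
    rintro _ ⟨i, hi, rfl⟩ h2 h1
    exact hloop i hi (h1.trans h2.symm)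
  rw [inDeg, outDeg, ← Finset.card_union_of_disjoint hdisj, ← Finset.filter_or]
  refine Finset.card_le_one.mpr ?_
  simp only [mem_filter, mem_image]
  rintro _ ⟨⟨i, hi, rfl⟩, hiv⟩ _ ⟨⟨j, hj, rfl⟩, hjv⟩
  rw [hsep i hi j hj v (by tauto) (by tauto)]

lemma not_transGen_self_of_not_hasWalkOfLength_three {F : Finset (V × V)}
    (h : ¬ HasWalkOfLength F 3) (v : V) : ¬ Relation.TransGen (fun u w => (u, w) ∈ F) v v := by
  have short : ∀ x y, Relation.TransGen (fun u w => (u, w) ∈ F) x y →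
      (x, y) ∈ F ∨ ∃ z, (x, z) ∈ F ∧ (z, y) ∈ F := by
    intro x y hxy
    induction hxy with
    | single hxy => exact Or.inl hxy
    | @tail b c _ hbc ih =>
      rcases ih with hxb | ⟨z, hxz, hzb⟩
      · exact Or.inr ⟨b, hxb, hbc⟩
      · refine (h ⟨fun n => [x, z, b, c].getD n x, fun i hi => ?_⟩).elim
        interval_cases i <;> assumption
  intro hv
  rcases short v v hv with hvv | ⟨z, hvz, hzv⟩
  · exact h ⟨fun _ => v, fun _ _ => hvv⟩
  · refine h ⟨fun n => if n % 2 = 0 then v else z, fun i hi => ?_⟩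
    interval_cases i <;> simpa

end Digraph

section CycleOrientation

variable {r : ℕ} [NeZero r]

lemma Fin.val_add_one_eq_ite (k : Fin r) :
    (k + 1).val = if k.val + 1 = r then 0 else k.val + 1 := by
  have hk := k.isLt
  rcases Nat.lt_or_ge 1 r with hr | hr
  · rw [Fin.val_add, Fin.val_one', Nat.mod_eq_of_lt hr]
    split_ifs with h
    · rw [h, Nat.mod_self]
    · exact Nat.mod_eq_of_lt (by omega)
  · obtain rfl : r = 1 := by have := NeZero.pos r; omega
    simp

lemma Fin.self_ne_add_one (hr : 2 ≤ r) (k : Fin r) : k ≠ k + 1 := by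
  have hk := k.isLt
  rw [Ne, Fin.ext_iff, Fin.val_add_one_eq_ite]
  split_ifs <;> omega

lemma Fin.add_one_add_one_ne_self (hr : 3 ≤ r) (k : Fin r) : k + 1 + 1 ≠ k := by
  have hk := k.isLt
  rw [Ne, Fin.ext_iff, Fin.val_add_one_eq_ite (k + 1), Fin.val_add_one_eq_ite k]
  split_ifs <;> omega

def cycleArc (o : Fin r → Bool) (i : Fin r) : Fin r × Fin r :=
  if o i then (i, i + 1) else (i + 1, i)

variable {o : Fin r → Bool}

lemma mem_endpoints_cycleArc (i v : Fin r) :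
    v = (cycleArc o i).1 ∨ v = (cycleArc o i).2 ↔ v = i ∨ v = i + 1 := by
  unfold cycleArc
  split <;> simp only [or_comm]

lemma cycleArc_injective (hr : 3 ≤ r) : Function.Injective (cycleArc o) := by
  intro i j h
  have hi := (mem_endpoints_cycleArc (o := o) j i).mp
    (h ▸ (mem_endpoints_cycleArc i i).mpr (.inl rfl))
  have hi1 := (mem_endpoints_cycleArc (o := o) j (i + 1)).mp
    (h ▸ (mem_endpoints_cycleArc i (i + 1)).mpr (.inr rfl))
  rcases hi with rfl | rfl
  · rfl
  · rcases hi1 with h1 | h1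
    · exact absurd h1 (Fin.add_one_add_one_ne_self hr j)
    · exact add_right_cancel h1

variable {S : Fin r → Prop}

lemma cycleArc_snd_injOn (hchange : ∀ i, o i ≠ o (i + 1) → S i ∨ S (i + 1)) :
    Set.InjOn (fun i => (cycleArc o i).2) {i | ¬ S i} := by
  intro i hi j hj h
  simp only [Set.mem_ofPred_eq, cycleArc] at hi hj h
  cases hoi : o i <;> cases hoj : o j <;>
    simp only [hoi, hoj, if_true, Bool.false_eq_true, if_false] at h
  · exact h
  · subst h
    exact absurd ((hchange j (by simp [hoi, hoj])).resolve_left hj) hi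
  · subst h
    exact absurd ((hchange i (by simp [hoi, hoj])).resolve_left hi) hj
  · exact add_right_cancel h

lemma cycleArc_fst_injOn (hchange : ∀ i, o i ≠ o (i + 1) → S i ∨ S (i + 1)) :
    Set.InjOn (fun i => (cycleArc o i).1) {i | ¬ S i} := by
  intro i hi j hj h
  simp only [Set.mem_ofPred_eq, cycleArc] at hi hj h
  cases hoi : o i <;> cases hoj : o j <;>
    simp only [hoi, hoj, if_true, Bool.false_eq_true, if_false] at h
  · exact add_right_cancel h
  · subst h
    exact absurd ((hchange i (by simp [hoi, hoj])).resolve_left hi) hj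
  · subst h
    exact absurd ((hchange j (by simp [hoi, hoj])).resolve_left hj) hi
  · exact h

lemma cycleArc_snd_eq_fst {i j : Fin r} (h : (cycleArc o i).2 = (cycleArc o j).1) :
    (o i = true ∧ o j = true ∧ j = i + 1) ∨ (o i = false ∧ o j = false ∧ i = j + 1) := by
  simp only [cycleArc] at h
  cases hoi : o i <;> cases hoj : o j <;> simp only [hoi, hoj] at h <;> simp_all

lemma not_hasWalkOfLength_three [DecidablePred S]
    (hwindow : ∀ i, o i = o (i + 1) → o (i + 1) = o (i + 1 + 1) →
      S i ∨ S (i + 1) ∨ S (i + 1 + 1)) :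
    ¬ HasWalkOfLength ((univ.filter (¬ S ·)).image (cycleArc o)) 3 := by
  rintro ⟨w, hw⟩
  have arc : ∀ k < 3, ∃ i, ¬ S i ∧ cycleArc o i = (w k, w (k + 1)) := fun k hk => by
    simpa using hw k hk
  obtain ⟨i₀, hS₀, h₀⟩ := arc 0 (by norm_num)
  obtain ⟨i₁, hS₁, h₁⟩ := arc 1 (by norm_num)
  obtain ⟨i₂, hS₂, h₂⟩ := arc 2 (by norm_num)
  have e₀₁ := cycleArc_snd_eq_fst (o := o) (i := i₀) (j := i₁) (by rw [h₀, h₁])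
  have e₁₂ := cycleArc_snd_eq_fst (o := o) (i := i₁) (j := i₂) (by rw [h₁, h₂])
  rcases e₀₁ with ⟨o₀, o₁, rfl⟩ | ⟨o₀, o₁, rfl⟩ <;>
    rcases e₁₂ with ⟨o₁', o₂, h⟩ | ⟨o₁', o₂, h⟩
  · subst h
    have := hwindow i₀ (by rw [o₀, o₁]) (by rw [o₁, o₂])
    tauto
  · simp [o₁] at o₁'
  · simp [o₁] at o₁'
  · subst h
    have := hwindow i₂ (by rw [o₁, o₂]) (by rw [o₀, o₁])
    tauto

theorem exists_decomposition_of_selection (hr : 3 ≤ r) [DecidablePred S]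
    (hsep : ∀ i, ¬ (S i ∧ S (i + 1)))
    (hchange : ∀ i, o i ≠ o (i + 1) → S i ∨ S (i + 1))
    (hwindow : ∀ i, o i = o (i + 1) → o (i + 1) = o (i + 1 + 1) →
      S i ∨ S (i + 1) ∨ S (i + 1 + 1)) :
    ∃ F2 F1 : Finset (Fin r × Fin r), F2 ∪ F1 = univ.image (cycleArc o) ∧ Disjoint F2 F1 ∧
      IsBoundedDLF F2 2 ∧ IsDirectedMatching F1 := by
  refine ⟨(univ.filter (¬ S ·)).image (cycleArc o), (univ.filter S).image (cycleArc o),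
    ?_, ?_, ?_, ?_⟩
  · rw [← image_union, union_comm, filter_union_filter_not_eq]
  · rw [disjoint_image (cycleArc_injective hr), disjoint_comm]
    exact disjoint_filter_filter_not _ _ _
  · have hwalk := not_hasWalkOfLength_three hwindow
    refine ⟨⟨inDeg_image_le_one ?_, outDeg_image_le_one ?_,
      not_transGen_self_of_not_hasWalkOfLength_three hwalk⟩, hwalk⟩
    · simpa using cycleArc_snd_injOn hchange
    · simpa using cycleArc_fst_injOn hchange
  · refine isDirectedMatching_image (fun i _ => ?_) (fun i hi j hj v hvi hvj => ?_)
    · unfold cycleArc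
      split
      · exact Fin.self_ne_add_one (by omega) i
      · exact (Fin.self_ne_add_one (by omega) i).symm
    · simp only [mem_filter, mem_univ, true_and] at hi hj
      rw [mem_endpoints_cycleArc] at hvi hvj
      rcases hvi with hvi | hvi <;> rcases hvj with hvj | hvj <;> have hij := hvi.symm.trans hvj
      · exact hij
      · subst hij
        exact absurd ⟨hj, hi⟩ (hsep j)
      · subst hij
        exact absurd ⟨hi, hj⟩ (hsep i)
      · exact add_right_cancel hij

end CycleOrientation

section OddCycle

variable {r : ℕ} [NeZero r]

lemma exists_apply_eq_apply_add_one_of_odd (hodd : Odd r) (o : Fin r → Bool) :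
    ∃ u, o u = o (u + 1) := by
  by_contra! h
  have two_step (u : Fin r) : o (u + 1 + 1) = o u := by
    have h0 := h u
    have h1 := h (u + 1)
    revert h0 h1
    cases o u <;> cases o (u + 1) <;> cases o (u + 1 + 1) <;> decide
  obtain ⟨m, hm⟩ := hodd
  have even_steps (n : ℕ) (hn : 2 * n < r) : o ⟨2 * n, hn⟩ = o 0 := by
    induction n with
    | zero => exact congrArg o (Fin.ext rfl)
    | succ n ih =>
      have hstep : (⟨2 * (n + 1), hn⟩ : Fin r) = ⟨2 * n, by omega⟩ + 1 + 1 := by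
        rw [Fin.ext_iff, Fin.val_add_one_eq_ite, Fin.val_add_one_eq_ite]
        split_ifs <;> simp only at * <;> omega
      rw [hstep, two_step, ih]
  have wrap : (⟨2 * m, by omega⟩ : Fin r) + 1 = 0 := by
    rw [Fin.ext_iff, Fin.val_add_one_eq_ite, if_pos hm.symm, Fin.val_zero]
  exact h _ (by rw [wrap, even_steps])

def IsPosEven (k : Fin r) : Prop := 0 < k.val ∧ k.val % 2 = 0

lemma not_isPosEven_and_add_one (k : Fin r) : ¬ (IsPosEven k ∧ IsPosEven (k + 1)) := by
  have hk := k.isLt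
  unfold IsPosEven
  rw [Fin.val_add_one_eq_ite]
  split_ifs <;> omega

lemma eq_zero_of_not_isPosEven (hodd : Odd r) {k : Fin r} (hk : ¬ IsPosEven k)
    (hk1 : ¬ IsPosEven (k + 1)) : k = 0 := by
  rw [Nat.odd_iff] at hodd
  have hlt := k.isLt
  unfold IsPosEven at hk hk1
  rw [Fin.val_add_one_eq_ite] at hk1
  rw [Fin.ext_iff, Fin.val_zero]
  split_ifs at hk1 <;> omega

lemma isPosEven_window (hr : 3 ≤ r) (hodd : Odd r) (k : Fin r) :
    IsPosEven k ∨ IsPosEven (k + 1) ∨ IsPosEven (k + 1 + 1) := by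
  rw [Nat.odd_iff] at hodd
  have hk := k.isLt
  unfold IsPosEven
  rw [Fin.val_add_one_eq_ite (k + 1), Fin.val_add_one_eq_ite k]
  split_ifs <;> omega

end OddCycle

theorem stmt3_general (r : ℕ) [NeZero r] (hr : 3 ≤ r) (hodd : Odd r) (o : Fin r → Bool)
    (C : Finset (Fin r × Fin r))
    (hC : C = Finset.image (fun i => if o i then (i, i + 1) else (i + 1, i)) Finset.univ) :
    ∃ F2 F1 : Finset (Fin r × Fin r),
      F2 ∪ F1 = C ∧ Disjoint F2 F1 ∧ IsBoundedDLF F2 2 ∧ IsDirectedMatching F1 := by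
  classical
  obtain ⟨u, hu⟩ := exists_apply_eq_apply_add_one_of_odd hodd o
  subst hC
  refine exists_decomposition_of_selection (S := fun i => IsPosEven (i - u)) hr
    (fun i => ?_) (fun i hi => ?_) (fun i _ _ => ?_)
  · rw [add_sub_right_comm]
    exact not_isPosEven_and_add_one _
  · by_contra! h
    rw [add_sub_right_comm] at h
    obtain rfl := sub_eq_zero.mp (eq_zero_of_not_isPosEven hodd h.1 h.2)
    exact hi hu
  · simp only [add_sub_right_comm]
    exact isPosEven_window hr hodd _

/-- An orientation of a cycle of odd length that is not a directed cycle
(not all edges consistently oriented) admits a decomposition into a 2-bounded directed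
linear forest and a directed matching. -/
theorem stmt3 (r : ℕ) [NeZero r] (hr : 3 ≤ r) (hodd : Odd r) (o : Fin r → Bool)
    (hnotdir : ¬ ∀ i j : Fin r, o i = o j)
    (C : Finset (Fin r × Fin r))
    (hC : C = Finset.image (fun i => if o i then (i, i + 1) else (i + 1, i)) Finset.univ) :
    ∃ F2 F1 : Finset (Fin r × Fin r),
      F2 ∪ F1 = C ∧ Disjoint F2 F1 ∧ IsBoundedDLF F2 2 ∧ IsDirectedMatching F1 :=
  stmt3_general r hr hodd o C hC
end

section
/- For every integer q >= 1, the q-variable gadget D_q — consisting of a directed path u_1 u_2 ... u_{2q} together with an extra arc u_{2i} v_i for each i in [q] — has the property that in every decomposition of D_q into two out-galaxies (F, F'), either all arcs u_{2i} v_i (i in [q]) belong to F, or all of them belong to F'. -/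
open Finset

/-- In the `q`-variable gadget `D_q` (a directed path
`u_1 u_2 ... u_{2q}` together with an arc `u_{2i} v_i` for each `i ∈ [q]`;
here `u_i = Sum.inl i` and `v_i = Sum.inr i`), in every decomposition into two
out-galaxies `(F, F')` either all arcs `u_{2i} v_i` belong to `F` or all belong
to `F'`. -/
theorem stmt9 (q : ℕ) (hq : 1 ≤ q) (D : Finset ((ℕ ⊕ ℕ) × (ℕ ⊕ ℕ)))
    (hD : D = (Finset.Icc 1 (2 * q - 1)).image
          (fun i => (Sum.inl i, Sum.inl (i + 1)))
        ∪ (Finset.Icc 1 q).image (fun i => (Sum.inl (2 * i), Sum.inr i))) :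
    ∀ F F' : Finset ((ℕ ⊕ ℕ) × (ℕ ⊕ ℕ)),
      F ∪ F' = D → Disjoint F F' → IsOutGalaxy F → IsOutGalaxy F' →
      (∀ i ∈ Finset.Icc 1 q, ((Sum.inl (2 * i) : ℕ ⊕ ℕ), (Sum.inr i : ℕ ⊕ ℕ)) ∈ F) ∨
      (∀ i ∈ Finset.Icc 1 q, ((Sum.inl (2 * i) : ℕ ⊕ ℕ), (Sum.inr i : ℕ ⊕ ℕ)) ∈ F') := by
  intro F F' hUnion hDisj hF hF'
  classical
  set a : ℕ → (ℕ ⊕ ℕ) × (ℕ ⊕ ℕ) := fun j => (Sum.inl j, Sum.inl (j+1)) with ha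
  set p : ℕ → (ℕ ⊕ ℕ) × (ℕ ⊕ ℕ) := fun i => (Sum.inl (2*i), Sum.inr i) with hp
  have haD : ∀ j, 1 ≤ j → j ≤ 2*q-1 → a j ∈ D := by
    intro j h1 h2
    rw [hD]
    exact Finset.mem_union_left _ (Finset.mem_image.2 ⟨j, Finset.mem_Icc.2 ⟨h1, h2⟩, rfl⟩)
  have hpD : ∀ i, 1 ≤ i → i ≤ q → p i ∈ D := by
    intro i h1 h2
    rw [hD]
    exact Finset.mem_union_right _ (Finset.mem_image.2 ⟨i, Finset.mem_Icc.2 ⟨h1, h2⟩, rfl⟩)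
  have hmem : ∀ x ∈ D, x ∈ F ∨ x ∈ F' := by
    intro x hx; rw [← hUnion] at hx; exact Finset.mem_union.1 hx
  have key : ∀ x y, x ∈ D → y ∈ D → x ≠ y → ArcConflict x y → (x ∈ F ↔ y ∉ F) := by
    intro x y hx hy hne hc
    constructor
    · intro hxF hyF; exact hF x hxF y hyF hne hc
    · intro hyF
      rcases hmem x hx with h | h
      · exact h
      · rcases hmem y hy with h' | h'
        · exact absurd h' hyF
        · exact absurd hc (hF' x h y h' hne)
  have alt : ∀ j, 1 ≤ j → j + 1 ≤ 2*q-1 → (a j ∈ F ↔ a (j+1) ∉ F) := by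
    intro j h1 h2
    refine key _ _ (haD j h1 (by omega)) (haD (j+1) (by omega) h2) ?_ ?_
    · intro h
      have : Sum.inl j = (Sum.inl (j+1) : ℕ ⊕ ℕ) := congrArg Prod.fst h
      simp at this
    · refine ⟨Sum.inl (j+1), Or.inr rfl, Or.inl rfl, ?_⟩
      rintro ⟨h, -⟩
      simp [ha] at h
  have par : ∀ i, 1 ≤ i → i ≤ q → (a (2*i-1) ∈ F ↔ a 1 ∈ F) := by
    intro i h1 h2
    induction i, h1 using Nat.le_induction with
    | base => simp
    | succ n hn ih =>
      have e1 := alt (2*n-1) (by omega) (by omega)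
      have e2 := alt (2*n) (by omega) (by omega)
      have h21 : 2*n-1+1 = 2*n := by omega
      rw [h21] at e1
      have h22 : 2*(n+1)-1 = 2*n+1 := by omega
      rw [h22]
      have := ih (by omega)
      tauto
  have pend : ∀ i, 1 ≤ i → i ≤ q → (p i ∈ F ↔ a (2*i-1) ∉ F) := by
    intro i h1 h2
    have hne : a (2*i-1) ≠ p i := by
      intro h
      have : (Sum.inl (2*i-1+1) : ℕ ⊕ ℕ) = Sum.inr i := congrArg Prod.snd h
      simp at this
    have hc : ArcConflict (a (2*i-1)) (p i) := by
      refine ⟨Sum.inl (2*i), Or.inr ?_, Or.inl rfl, ?_⟩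
      · simp [ha]; omega
      · rintro ⟨h, -⟩
        simp [ha] at h
        omega
    have := key _ _ (haD (2*i-1) (by omega) (by omega)) (hpD i h1 h2) hne hc
    tauto
  by_cases h : a 1 ∈ F
  · right
    intro i hi
    rw [Finset.mem_Icc] at hi
    have h1 := pend i hi.1 hi.2
    have h2 := par i hi.1 hi.2
    rcases hmem (p i) (hpD i hi.1 hi.2) with h' | h'
    · exact absurd ((par i hi.1 hi.2).2 h) (h1.1 h')
    · exact h'
  · left
    intro i hi
    rw [Finset.mem_Icc] at hi
    have h1 := pend i hi.1 hi.2
    have h2 := par i hi.1 hi.2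
    exact h1.2 (fun hh => h (h2.1 hh))
end

section
/- Consider the (k,l,alpha_1,alpha_2)-clause gadget D with vertex set {r, s_1,...,s_{alpha_1}, s'_1,...,s'_{alpha_2}, u_1,...,u_{alpha_2}} and arcs r s_i for i in [alpha_1], and r u_i, u_i s'_i for i in [alpha_2], where alpha_1 + alpha_2 = l+1. Then there is no decomposition of D into a k-bounded out-galaxy F_k and an l-bounded out-galaxy F_l such that the arcs of F_k entering S_1 ∪ S_2 are exactly the arcs u_i s'_i (i in [alpha_2]), where S_1 = {s_1,...,s_{alpha_1}} and S_2 = {s'_1,...,s'_{alpha_2}}. -/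
open Finset

/-- The `(k, l, α₁, α₂)`-clause gadget (root `r = 0`, vertices
`s_i = i` for `i ∈ [α₁]`, `u_i = α₁ + i` and `s'_i = α₁ + α₂ + i` for `i ∈ [α₂]`,
arcs `r s_i`, `r u_i` and `u_i s'_i`, with `α₁ + α₂ = l + 1`, `l ≥ 2` and
`k ≥ l + 1` possibly infinite) admits no decomposition into a `k`-bounded out-galaxy
`F_k` and an `l`-bounded out-galaxy `F_l` such that the arcs of `F_k` entering
`S₁ ∪ S₂` are exactly the arcs `u_i s'_i`. -/
theorem stmt11 (l : ℕ) (hl : 2 ≤ l) (k : ℕ∞) (hk : (l : ℕ∞) + 1 ≤ k)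
    (α₁ α₂ : ℕ) (hα : α₁ + α₂ = l + 1)
    (D : Finset (ℕ × ℕ))
    (hD : D = (Finset.Icc 1 α₁).image (fun i => ((0 : ℕ), i))
        ∪ (Finset.Icc 1 α₂).image (fun i => ((0 : ℕ), α₁ + i))
        ∪ (Finset.Icc 1 α₂).image (fun i => (α₁ + i, α₁ + α₂ + i))) :
    ¬ ∃ Fk Fl : Finset (ℕ × ℕ),
        Fk ∪ Fl = D ∧ Disjoint Fk Fl ∧
        IsOutGalaxy Fk ∧ (∀ v, (outDeg Fk v : ℕ∞) ≤ k) ∧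
        IsBoundedOutGalaxy Fl l ∧
        (∀ i ∈ Finset.Icc 1 α₂, (α₁ + i, α₁ + α₂ + i) ∈ Fk) ∧
        (∀ i ∈ Finset.Icc 1 α₁, ((0 : ℕ), i) ∉ Fk) := by
  rintro ⟨Fk, Fl, hunion, hdisj, hgalk, hdegk, ⟨hgall, hdegl⟩, hin, hnot⟩
  -- arcs r → u_i cannot be in Fk (they'd conflict with u_i → s'_i)
  have hru : ∀ i ∈ Finset.Icc 1 α₂, ((0 : ℕ), α₁ + i) ∉ Fk := by
    intro i hi hmem
    have hi1 : 1 ≤ i := (Finset.mem_Icc.mp hi).1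
    refine hgalk _ hmem _ (hin i hi) ?_ ?_
    · intro heq
      have := congrArg Prod.fst heq
      simp at this; omega
    · exact ⟨α₁ + i, Or.inr rfl, Or.inl rfl, by simp; omega⟩
  -- all α₁ + α₂ arcs leaving the root are in Fl
  set A : Finset (ℕ × ℕ) := (Finset.Icc 1 α₁).image (fun i => ((0 : ℕ), i))
      ∪ (Finset.Icc 1 α₂).image (fun i => ((0 : ℕ), α₁ + i)) with hA
  have hsub : A ⊆ Fl.filter (fun a => a.1 = 0) := by
    intro a ha
    have haD : a ∈ Fk ∪ Fl := by
      rw [hunion, hD]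
      exact Finset.mem_union_left _ ha
    have ha0 : a.1 = 0 ∧ a ∉ Fk := by
      rw [hA] at ha
      rcases Finset.mem_union.mp ha with h | h <;>
        obtain ⟨i, hi, rfl⟩ := Finset.mem_image.mp h
      · exact ⟨rfl, hnot i hi⟩
      · exact ⟨rfl, hru i hi⟩
    rcases Finset.mem_union.mp haD with h | h
    · exact absurd h ha0.2
    · exact Finset.mem_filter.mpr ⟨h, ha0.1⟩
  have hcard : A.card = α₁ + α₂ := by
    rw [hA, Finset.card_union_of_disjoint, Finset.card_image_of_injective,
        Finset.card_image_of_injective, Nat.card_Icc, Nat.card_Icc]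
    · omega
    · intro x y hxy; simpa using hxy
    · intro x y hxy; have := congrArg Prod.snd hxy; simp at this; omega
    · rw [Finset.disjoint_left]
      rintro a ha hb
      obtain ⟨i, hi, rfl⟩ := Finset.mem_image.mp ha
      obtain ⟨j, hj, hji⟩ := Finset.mem_image.mp hb
      have := congrArg Prod.snd hji
      simp only [Finset.mem_Icc] at hi hj
      simp at this; omega
  have hle : A.card ≤ outDeg Fl 0 := Finset.card_le_card hsub
  have := hdegl 0
  omega
end

section
/- Consider the clause gadget D on vertices {y_1, y_2, y_3, t_1, t_2, t_3} with arcs y_1y_2, y_2y_3, y_3y_1 and a_i = t_i y_i for i in [3]. For k, l >= 3, in every decomposition of D into a k-bounded directed linear forest F_k and an l-bounded directed linear forest F_l, at least one of a_1, a_2, a_3 lies in F_k and at least one lies in F_l. -/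
open Finset

lemma inDeg_two {V : Type*} [DecidableEq V] {F : Finset (V × V)} {a b v : V}
    (ha : (a, v) ∈ F) (hb : (b, v) ∈ F) (hab : a ≠ b) : ¬ inDeg F v ≤ 1 := by
  have h2 : 1 < (F.filter (fun x => x.2 = v)).card := by
    apply Finset.one_lt_card.mpr
    exact ⟨(a, v), Finset.mem_filter.mpr ⟨ha, rfl⟩,
      (b, v), Finset.mem_filter.mpr ⟨hb, rfl⟩, by simp [hab]⟩
  simpa [inDeg] using h2

lemma key_side {F G : Finset (Fin 6 × Fin 6)}
    (hFin : ∀ v, inDeg F v ≤ 1)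
    (hGcyc : ∀ v : Fin 6, ¬ Relation.TransGen (fun u w => (u, w) ∈ G) v v)
    (h01 : ((0 : Fin 6), (1 : Fin 6)) ∈ F ∨ ((0 : Fin 6), (1 : Fin 6)) ∈ G)
    (h12 : ((1 : Fin 6), (2 : Fin 6)) ∈ F ∨ ((1 : Fin 6), (2 : Fin 6)) ∈ G)
    (h20 : ((2 : Fin 6), (0 : Fin 6)) ∈ F ∨ ((2 : Fin 6), (0 : Fin 6)) ∈ G)
    (ha1 : ((3 : Fin 6), (0 : Fin 6)) ∈ F)
    (ha2 : ((4 : Fin 6), (1 : Fin 6)) ∈ F)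
    (ha3 : ((5 : Fin 6), (2 : Fin 6)) ∈ F) : False := by
  rcases h01 with h01 | h01
  · exact inDeg_two h01 ha2 (by decide) (hFin 1)
  rcases h12 with h12 | h12
  · exact inDeg_two h12 ha3 (by decide) (hFin 2)
  rcases h20 with h20 | h20
  · exact inDeg_two h20 ha1 (by decide) (hFin 0)
  exact hGcyc 0 (Relation.TransGen.head h01 (Relation.TransGen.head h12
    (Relation.TransGen.single h20)))

/-- In the clause gadget on `{y₁,y₂,y₃,t₁,t₂,t₃}` (here
`y₁,y₂,y₃ = 0,1,2` and `t₁,t₂,t₃ = 3,4,5`) with arcs `y₁y₂, y₂y₃, y₃y₁` and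
`aᵢ = tᵢyᵢ`, for all `k, l ≥ 3`, every decomposition into a `k`-bounded directed
linear forest `F_k` and an `l`-bounded directed linear forest `F_l` has at least one
of `a₁, a₂, a₃` in `F_k` and at least one in `F_l`. -/
theorem stmt12 (k l : ℕ) (hk : 3 ≤ k) (hl : 3 ≤ l)
    (D : Finset (Fin 6 × Fin 6))
    (hD : D = {(0, 1), (1, 2), (2, 0), (3, 0), (4, 1), (5, 2)}) :
    ∀ Fk Fl : Finset (Fin 6 × Fin 6), Fk ∪ Fl = D → Disjoint Fk Fl →
      IsBoundedDLF Fk k → IsBoundedDLF Fl l →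
      (((3 : Fin 6), (0 : Fin 6)) ∈ Fk ∨ ((4 : Fin 6), (1 : Fin 6)) ∈ Fk ∨
        ((5 : Fin 6), (2 : Fin 6)) ∈ Fk) ∧
      (((3 : Fin 6), (0 : Fin 6)) ∈ Fl ∨ ((4 : Fin 6), (1 : Fin 6)) ∈ Fl ∨
        ((5 : Fin 6), (2 : Fin 6)) ∈ Fl) := by
  intro Fk Fl hUnion hDisj hFk hFl
  obtain ⟨⟨hkin, -, hkcyc⟩, -⟩ := hFk
  obtain ⟨⟨hlin, -, hlcyc⟩, -⟩ := hFl
  have mem : ∀ a : Fin 6 × Fin 6,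
      a ∈ ({(0, 1), (1, 2), (2, 0), (3, 0), (4, 1), (5, 2)} : Finset (Fin 6 × Fin 6)) →
      a ∈ Fk ∨ a ∈ Fl := by
    intro a ha
    rw [← hD, ← hUnion] at ha
    exact Finset.mem_union.mp ha
  have h01 := mem (0, 1) (by decide)
  have h12 := mem (1, 2) (by decide)
  have h20 := mem (2, 0) (by decide)
  have hA1 := mem (3, 0) (by decide)
  have hA2 := mem (4, 1) (by decide)
  have hA3 := mem (5, 2) (by decide)
  constructor
  · by_contra h
    push_neg at h
    obtain ⟨n1, n2, n3⟩ := h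
    exact key_side hlin hkcyc (h01.symm.imp id (fun h => h))
      (h12.symm.imp id (fun h => h)) (h20.symm.imp id (fun h => h))
      (hA1.resolve_left n1) (hA2.resolve_left n2) (hA3.resolve_left n3)
  · by_contra h
    push_neg at h
    obtain ⟨n1, n2, n3⟩ := h
    exact key_side hkin hlcyc h01 h12 h20
      (hA1.resolve_right n1) (hA2.resolve_right n2) (hA3.resolve_right n3)
end

section
/- In every decomposition of the digraph D with vertices {v_1, v_2, v_3, v_4, z} and arcs {v_1v_2, v_2v_3, v_2v_4, v_1z} into a k-bounded directed linear forest F_k (k >= 2) and a directed matching F_1, the arc v_1z belongs to F_1. Moreover, such a decomposition exists. -/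
open Finset

/- If `v₁z` were in `F_k`, then `v₁v₂` would have to be in the matching `F₁` (out-degree
of `v₁` in `F_k`), which leaves neither `v₂v₃` nor `v₂v₄` for `F₁`; both would then leave `v₂`
in `F_k`. The decomposition `F_k = {v₁v₂, v₂v₃}`, `F₁ = {v₂v₄, v₁z}` shows existence. -/

section Degrees

variable {V : Type*} [DecidableEq V] {F : Finset (V × V)}

lemma eq_of_outDeg_le_one {v x y : V} (hv : outDeg F v ≤ 1) (hx : (v, x) ∈ F)
    (hy : (v, y) ∈ F) : x = y := by
  have := card_le_one.1 hv (v, x) (mem_filter.2 ⟨hx, rfl⟩) (v, y) (mem_filter.2 ⟨hy, rfl⟩)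
  exact (Prod.ext_iff.1 this).2

lemma IsDirectedMatching.eq_of_incident (hF : IsDirectedMatching F) {a b : V × V} {v : V}
    (ha : a ∈ F) (hb : b ∈ F) (hav : a.1 = v ∨ a.2 = v) (hbv : b.1 = v ∨ b.2 = v) :
    a = b := by
  have hcard : (F.filter fun c => c.1 = v ∨ c.2 = v).card ≤ 1 := by
    rw [filter_or]
    exact (card_union_le _ _).trans (by rw [add_comm]; exact hF v)
  exact card_le_one.1 hcard a (mem_filter.2 ⟨ha, hav⟩) b (mem_filter.2 ⟨hb, hbv⟩)

end Degrees

section Height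

variable {V : Type*} {F : Finset (V × V)} (h : V → ℕ)

lemma not_transGen_self_of_height (hlt : ∀ a ∈ F, h a.1 < h a.2) (v : V) :
    ¬ Relation.TransGen (fun u w => (u, w) ∈ F) v v := fun hv => by
  have := Relation.TransGen.lift h (p := (· < ·)) (fun u w huw => hlt (u, w) huw) v v hv
  rw [Relation.transGen_eq_self] at this
  exact lt_irrefl _ this

lemma not_hasWalkOfLength_of_height {k : ℕ} (hlt : ∀ a ∈ F, h a.1 < h a.2)
    (hle : ∀ a ∈ F, h a.2 ≤ k) : ¬ HasWalkOfLength F (k + 1) := by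
  rintro ⟨w, hw⟩
  have hgrow : ∀ i ≤ k + 1, i ≤ h (w i) := by
    intro i hi
    induction i with
    | zero => exact Nat.zero_le _
    | succ i ih => exact (ih (by omega)).trans_lt (hlt _ (hw i (by omega)))
  have hlast : h (w (k + 1)) ≤ k := hle _ (hw k (by omega))
  have := hgrow (k + 1) le_rfl
  omega

lemma isBoundedDLF_of_height [DecidableEq V] {k : ℕ} (hin : ∀ v, inDeg F v ≤ 1)
    (hout : ∀ v, outDeg F v ≤ 1) (hlt : ∀ a ∈ F, h a.1 < h a.2)
    (hle : ∀ a ∈ F, h a.2 ≤ k) : IsBoundedDLF F k :=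
  ⟨⟨hin, hout, not_transGen_self_of_height h hlt⟩, not_hasWalkOfLength_of_height h hlt hle⟩

end Height

/-- In the short `k`-in-forcer with vertices `v₁,v₂,v₃,v₄,z = 0,1,2,3,4`
and arcs `v₁v₂, v₂v₃, v₂v₄, v₁z`, for every `k ≥ 2`, in every decomposition into a
`k`-bounded directed linear forest `F_k` and a directed matching `F₁` the arc `v₁z`
belongs to `F₁`; moreover such a decomposition exists. -/
theorem stmt13 (k : ℕ) (hk : 2 ≤ k) (D : Finset (Fin 5 × Fin 5))
    (hD : D = {(0, 1), (1, 2), (1, 3), (0, 4)}) :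
    (∀ Fk F1 : Finset (Fin 5 × Fin 5), Fk ∪ F1 = D → Disjoint Fk F1 →
        IsBoundedDLF Fk k → IsDirectedMatching F1 →
        ((0 : Fin 5), (4 : Fin 5)) ∈ F1) ∧
    (∃ Fk F1 : Finset (Fin 5 × Fin 5), Fk ∪ F1 = D ∧ Disjoint Fk F1 ∧
        IsBoundedDLF Fk k ∧ IsDirectedMatching F1) := by
  subst hD
  constructor
  · intro Fk F1 hU _ ⟨⟨_, hout, _⟩, _⟩ hF1
    have hsplit : ∀ a ∈ ({(0, 1), (1, 2), (1, 3), (0, 4)} : Finset (Fin 5 × Fin 5)),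
        a ∈ Fk ∨ a ∈ F1 := fun a ha => mem_union.1 (hU ▸ ha)
    refine (hsplit (0, 4) (by simp)).resolve_left fun h04 => ?_
    have h01 : ((0, 1) : Fin 5 × Fin 5) ∈ F1 :=
      (hsplit (0, 1) (by simp)).resolve_left fun h01 =>
        absurd (eq_of_outDeg_le_one (hout 0) h01 h04) (by decide)
    have hnot_F1 : ∀ x : Fin 5, x ≠ 1 → ((1, x) : Fin 5 × Fin 5) ∉ F1 := fun x hx h1x =>
      absurd (hF1.eq_of_incident h01 h1x (Or.inr rfl) (Or.inl rfl)) (by simp [hx.symm])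
    have h12 := (hsplit (1, 2) (by simp)).resolve_right (hnot_F1 2 (by decide))
    have h13 := (hsplit (1, 3) (by simp)).resolve_right (hnot_F1 3 (by decide))
    exact absurd (eq_of_outDeg_le_one (hout 1) h12 h13) (by decide)
  · refine ⟨{(0, 1), (1, 2)}, {(1, 3), (0, 4)}, by decide, by decide,
      isBoundedDLF_of_height Fin.val (by decide) (by decide) (by decide) ?_,
      by unfold IsDirectedMatching; decide⟩
    simp only [mem_insert, mem_singleton, forall_eq_or_imp, forall_eq, Fin.val_one, Fin.val_two]
    omega
end

section
/- Let k >= 3 and let T_k be the orientation of a binary tree of depth k-3 in which every arc points towards the tip x, together with an additional vertex z and arc a = xz. Then in every decomposition of T_k into two k-bounded directed linear forests (F, F'), the arc a is the last arc of a directed path of length k-2 in whichever part contains it. -/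
open Finset

/-- Greedy descent from the tip picking a child arc inside `P`. -/
def chem (P : Finset (ℕ × ℕ)) : ℕ → ℕ
  | 0 => 1
  | d + 1 =>
    if (2 * chem P d, chem P d) ∈ P then 2 * chem P d else 2 * chem P d + 1

lemma chem_bounds (P : Finset (ℕ × ℕ)) (d : ℕ) :
    2 ^ d ≤ chem P d ∧ chem P d ≤ 2 ^ (d + 1) - 1 := by
  induction d with
  | zero => simp [chem]
  | succ d ih =>
    have h2 : 2 ^ (d + 1) = 2 * 2 ^ d := by ring
    have h3 : 2 ^ (d + 2) = 2 * 2 ^ (d + 1) := by ring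
    have hp : 1 ≤ 2 ^ d := Nat.one_le_two_pow
    unfold chem
    split <;> omega

/-- Let `k ≥ 3` and let `T_k` be the binary tree of depth `k - 3`
oriented towards its tip, together with an extra arc `a` from the tip to a new vertex
`z`. (Here the tree vertices are `1, ..., 2^(k-3+1) - 1` in heap order, with an arc
`j → j / 2` for each `j ≥ 2`; the tip is `1` and `z = 0`, so `a = (1, 0)`.) Then in
every decomposition of `T_k` into two `k`-bounded directed linear forests `(F, F')`,
the arc `a` is the last arc of a directed path of length `k - 2` in whichever part
contains it. -/


theorem stmt14 (k : ℕ) (hk : 3 ≤ k) (D : Finset (ℕ × ℕ))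
    (hD : D = (Finset.Icc 2 (2 ^ (k - 3 + 1) - 1)).image (fun j => (j, j / 2))
        ∪ {((1 : ℕ), (0 : ℕ))}) :
    ∀ F F' : Finset (ℕ × ℕ), F ∪ F' = D → Disjoint F F' →
      IsBoundedDLF F k → IsBoundedDLF F' k →
      ∀ P : Finset (ℕ × ℕ), (P = F ∨ P = F') → ((1 : ℕ), (0 : ℕ)) ∈ P →
        ∃ w : ℕ → ℕ, w (k - 3) = 1 ∧ w (k - 2) = 0 ∧
          ∀ i < k - 2, (w i, w (i + 1)) ∈ P := by
  intro F F' hUnion hDisj hF hF' P hP h10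
  -- in-degree bounds for both parts
  have hFin : ∀ v, inDeg F v ≤ 1 := hF.1.1
  have hF'in : ∀ v, inDeg F' v ≤ 1 := hF'.1.1
  -- both child arcs of an internal vertex lie in D
  have hchild : ∀ j : ℕ, 1 ≤ j → j ≤ 2 ^ (k - 3) - 1 →
      (2 * j, j) ∈ D ∧ (2 * j + 1, j) ∈ D := by
    intro j hj1 hj2
    have hp : 1 ≤ 2 ^ (k - 3) := Nat.one_le_two_pow
    have h2 : 2 ^ (k - 3 + 1) = 2 * 2 ^ (k - 3) := by ring
    constructor
    · rw [hD]
      refine Finset.mem_union_left _ ?_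
      refine Finset.mem_image.2 ⟨2 * j, ?_, by simp [Nat.mul_div_cancel_left j]⟩
      simp only [Finset.mem_Icc]
      omega
    · rw [hD]
      refine Finset.mem_union_left _ ?_
      refine Finset.mem_image.2 ⟨2 * j + 1, ?_, ?_⟩
      · simp only [Finset.mem_Icc]; omega
      · show ((2 * j + 1 : ℕ), (2 * j + 1) / 2) = (2 * j + 1, j)
        congr 1
        omega
  -- at least one child arc of an internal vertex lies in P
  have hstep : ∀ j : ℕ, 1 ≤ j → j ≤ 2 ^ (k - 3) - 1 →
      (2 * j, j) ∈ P ∨ (2 * j + 1, j) ∈ P := by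
    intro j hj1 hj2
    obtain ⟨ha, hb⟩ := hchild j hj1 hj2
    by_contra hcon
    push_neg at hcon
    obtain ⟨ha', hb'⟩ := hcon
    -- both arcs are in the other part Q
    have hQ : ∃ Q : Finset (ℕ × ℕ), (∀ v, inDeg Q v ≤ 1) ∧
        (2 * j, j) ∈ Q ∧ (2 * j + 1, j) ∈ Q := by
      rcases hP with rfl | rfl
      · refine ⟨F', hF'in, ?_, ?_⟩
        · have := hUnion ▸ ha
          rcases Finset.mem_union.1 (hUnion.symm ▸ ha) with h | h
          · exact absurd h ha'
          · exact h
        · rcases Finset.mem_union.1 (hUnion.symm ▸ hb) with h | h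
          · exact absurd h hb'
          · exact h
      · refine ⟨F, hFin, ?_, ?_⟩
        · rcases Finset.mem_union.1 (hUnion.symm ▸ ha) with h | h
          · exact h
          · exact absurd h ha'
        · rcases Finset.mem_union.1 (hUnion.symm ▸ hb) with h | h
          · exact h
          · exact absurd h hb'
    obtain ⟨Q, hQin, hQa, hQb⟩ := hQ
    have hsub : ({(2 * j, j), (2 * j + 1, j)} : Finset (ℕ × ℕ)) ⊆
        Q.filter (fun a => a.2 = j) := by
      intro x hx
      simp only [Finset.mem_insert, Finset.mem_singleton] at hx
      rcases hx with rfl | rfl <;> simp [Finset.mem_filter, hQa, hQb]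
    have hne : ((2 * j : ℕ), j) ≠ (2 * j + 1, j) := by
      intro h; exact absurd (congrArg Prod.fst h) (by omega)
    have h2 : 2 ≤ inDeg Q j := by
      have := Finset.card_le_card hsub
      rwa [Finset.card_pair hne] at this
    have := hQin j
    omega
  -- chem descends along arcs of P
  have harc : ∀ d : ℕ, d < k - 3 → (chem P (d + 1), chem P d) ∈ P := by
    intro d hd
    obtain ⟨hlo, hhi⟩ := chem_bounds P d
    have h1 : 1 ≤ chem P d := le_trans Nat.one_le_two_pow hlo
    have h2 : chem P d ≤ 2 ^ (k - 3) - 1 := by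
      have : 2 ^ (d + 1) ≤ 2 ^ (k - 3) := Nat.pow_le_pow_right (by norm_num) (by omega)
      omega
    rcases hstep (chem P d) h1 h2 with h | h
    · simpa [chem, h] using h
    · by_cases hc : (2 * chem P d, chem P d) ∈ P
      · simpa [chem, hc] using hc
      · simpa [chem, hc] using h
  refine ⟨fun i => if i = k - 2 then 0 else chem P (k - 3 - i), ?_, ?_, ?_⟩
  · have : k - 3 ≠ k - 2 := by omega
    simp [this, chem]
  · simp
  · intro i hi
    by_cases hik : i = k - 3
    · subst hik
      have h1 : k - 3 ≠ k - 2 := by omega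
      have h2 : k - 3 + 1 = k - 2 := by omega
      simp only [h1, if_false, h2, if_pos rfl, Nat.sub_self]
      simpa [chem] using h10
    · have hi3 : i < k - 3 := by omega
      have h1 : i ≠ k - 2 := by omega
      have h2 : i + 1 ≠ k - 2 := by omega
      have h3 : k - 3 - i = (k - 3 - (i + 1)) + 1 := by omega
      simp only [h1, h2, if_false]
      rw [h3]
      exact harc (k - 3 - (i + 1)) (by omega)
end

section
/- Let D be a 2-diregular digraph and let D' be obtained from D (with respect to a fixed vertex x and parameter k=1) by splitting each vertex v into v_+ and v_-, replacing each arc uv of D by u_+ v_-, and adding the arc v_- v_+ for every vertex v except x. If D contains a Hamiltonian cycle, then D' admits a decomposition into a directed linear forest (unbounded) and a 1-bounded directed linear forest (a directed matching). -/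
open Finset

/-- Let `D` be a 2-diregular digraph, `x` a fixed vertex, and `D'` the
split digraph: each vertex `v` becomes `v₊ = Sum.inl v` and `v₋ = Sum.inr v`, each arc
`uv` of `D` becomes `u₊ v₋`, and the arc `v₋ v₊` is added for every `v ≠ x`. If `D`
has a Hamiltonian cycle (here: a periodic closed walk of period `|V|` visiting every
vertex exactly once per period), then `D'` decomposes into an (unbounded) directed
linear forest and a directed matching. -/
theorem stmt15 {V : Type*} [Fintype V] [DecidableEq V]
    (D : Finset (V × V)) (hreg : ∀ v, inDeg D v = 2 ∧ outDeg D v = 2) (x : V)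
    (D' : Finset ((V ⊕ V) × (V ⊕ V)))
    (hD' : D' = D.image (fun a => (Sum.inl a.1, Sum.inr a.2))
        ∪ (Finset.univ.erase x).image (fun v => (Sum.inr v, Sum.inl v)))
    (hham : ∃ c : ℕ → V,
        (∀ i, (c i, c (i + 1)) ∈ D) ∧
        (∀ i, c (i + Fintype.card V) = c i) ∧
        (∀ v, ∃ i, c i = v) ∧
        (∀ i j, i < Fintype.card V → j < Fintype.card V → c i = c j → i = j)) :
    ∃ F M : Finset ((V ⊕ V) × (V ⊕ V)),
      F ∪ M = D' ∧ Disjoint F M ∧ IsDLF F ∧ IsDirectedMatching M := by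
  classical
  obtain ⟨c, hc1, hc2, hc3, hc4⟩ := hham
  haveI : Nonempty V := ⟨c 0⟩
  set n := Fintype.card V with hn_def
  have hn : 0 < n := Fintype.card_pos
  -- periodicity modulo n
  have key : ∀ q r, c (r + q * n) = c r := by
    intro q
    induction q with
    | zero => intro r; simp
    | succ q ih =>
      intro r
      have h1 : r + (q + 1) * n = r + q * n + n := by ring
      rw [h1, hc2, ih]
  have cmod : ∀ i, c i = c (i % n) := by
    intro i
    conv_lhs => rw [← Nat.mod_add_div' i n]
    exact key (i / n) (i % n)
  obtain ⟨i0, hi0⟩ := hc3 x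
  set d : ℕ → V := fun j => c (i0 + j) with hd_def
  have hdmod : ∀ a b, d a = d b → a % n = b % n := by
    intro a b h
    have h1 : c ((i0 + a) % n) = c ((i0 + b) % n) := by
      rw [← cmod, ← cmod]; exact h
    have h2 := hc4 _ _ (Nat.mod_lt _ hn) (Nat.mod_lt _ hn) h1
    have h3 : Nat.ModEq n (i0 + a) (i0 + b) := h2
    exact Nat.ModEq.add_left_cancel' i0 h3
  have hd_inj : ∀ a b, a < n → b < n → d a = d b → a = b := by
    intro a b ha hb h
    have := hdmod a b h
    rwa [Nat.mod_eq_of_lt ha, Nat.mod_eq_of_lt hb] at this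
  have hd0 : d 0 = x := by simpa [hd_def] using hi0
  have hdn : d n = x := by
    show c (i0 + n) = x
    rw [hc2]; exact hi0
  -- surjectivity of d on range n
  have hex : ∀ v, ∃ j, j < n ∧ d j = v := by
    have hinjF : Function.Injective (fun j : Fin n => d j) := by
      intro a b h
      exact Fin.ext (hd_inj a b a.2 b.2 h)
    have hbij : Function.Bijective (fun j : Fin n => d j) :=
      (Fintype.bijective_iff_injective_and_card _).mpr ⟨hinjF, by simp [hn_def]⟩
    intro v
    obtain ⟨j, hj⟩ := hbij.2 v
    exact ⟨j, j.2, hj⟩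
  choose idx hidx1 hidx2 using hex
  have hidx_d : ∀ j, j < n → idx (d j) = j := fun j hj =>
    hd_inj _ _ (hidx1 _) hj (hidx2 _)
  have hidx_x : idx x = 0 := by rw [← hd0, hidx_d 0 hn]
  have hidx_pos : ∀ v, v ≠ x → 0 < idx v := by
    intro v hv
    rcases Nat.eq_zero_or_pos (idx v) with h | h
    · exfalso; apply hv
      have := hidx2 v
      rw [h, hd0] at this; exact this.symm
    · exact h
  -- head injectivity
  have hhead_inj : ∀ j j', j < n → j' < n → d (j + 1) = d (j' + 1) → j = j' := by
    intro j j' hj hj' h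
    have h := hdmod _ _ h
    rcases Nat.lt_or_ge (j + 1) n with h1 | h1
    · rcases Nat.lt_or_ge (j' + 1) n with h2 | h2
      · rw [Nat.mod_eq_of_lt h1, Nat.mod_eq_of_lt h2] at h; omega
      · have hj2 : j' + 1 = n := by omega
        rw [hj2, Nat.mod_self, Nat.mod_eq_of_lt h1] at h; omega
    · have hj1 : j + 1 = n := by omega
      rw [hj1, Nat.mod_self] at h
      rcases Nat.lt_or_ge (j' + 1) n with h2 | h2
      · rw [Nat.mod_eq_of_lt h2] at h; omega
      · omega
  -- every vertex is the head of some cycle arc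
  have hexhead : ∀ v, ∃ j, j < n ∧ d (j + 1) = v := by
    intro v
    by_cases hv : v = x
    · refine ⟨n - 1, by omega, ?_⟩
      have h1 : n - 1 + 1 = n := by omega
      rw [h1, hdn, hv]
    · refine ⟨idx v - 1, by have := hidx1 v; omega, ?_⟩
      have hp := hidx_pos v hv
      have h1 : idx v - 1 + 1 = idx v := by omega
      rw [h1, hidx2]
  set Ham : Finset (V × V) := (Finset.range n).image (fun j => (d j, d (j + 1)))
    with hHam_def
  have hHamD : Ham ⊆ D := by
    intro p hp
    rw [hHam_def, Finset.mem_image] at hp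
    obtain ⟨j, _, rfl⟩ := hp
    have := hc1 (i0 + j)
    simpa [hd_def, add_assoc] using this
  have hHam_mem : ∀ j, j < n → (d j, d (j + 1)) ∈ Ham := by
    intro j hj
    rw [hHam_def, Finset.mem_image]
    exact ⟨j, Finset.mem_range.mpr hj, rfl⟩
  have hHam_tail : ∀ p ∈ Ham, ∀ q ∈ Ham, p.1 = q.1 → p = q := by
    intro p hp q hq h
    rw [hHam_def, Finset.mem_image] at hp hq
    obtain ⟨j, hj, rfl⟩ := hp
    obtain ⟨j', hj', rfl⟩ := hq
    rw [Finset.mem_range] at hj hj'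
    have : j = j' := hd_inj j j' hj hj' h
    rw [this]
  have hHam_head : ∀ p ∈ Ham, ∀ q ∈ Ham, p.2 = q.2 → p = q := by
    intro p hp q hq h
    rw [hHam_def, Finset.mem_image] at hp hq
    obtain ⟨j, hj, rfl⟩ := hp
    obtain ⟨j', hj', rfl⟩ := hq
    rw [Finset.mem_range] at hj hj'
    have : j = j' := hhead_inj j j' hj hj' h
    rw [this]
  -- uniqueness of non-Ham arcs with given tail / head
  have hMout : ∀ u v1 v2, (u, v1) ∈ D → (u, v1) ∉ Ham → (u, v2) ∈ D → (u, v2) ∉ Ham →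
      v1 = v2 := by
    intro u v1 v2 h1 h1n h2 h2n
    by_contra hne
    have hwH : (u, d (idx u + 1)) ∈ Ham := by
      have := hHam_mem (idx u) (hidx1 u)
      rwa [hidx2] at this
    have hwD : (u, d (idx u + 1)) ∈ D := hHamD hwH
    have hne1 : v1 ≠ d (idx u + 1) := fun h => h1n (h ▸ hwH)
    have hne2 : v2 ≠ d (idx u + 1) := fun h => h2n (h ▸ hwH)
    have hsub : ({(u, v1), (u, v2), (u, d (idx u + 1))} : Finset (V × V)) ⊆
        D.filter (fun a => a.1 = u) := by
      intro a ha
      simp only [Finset.mem_insert, Finset.mem_singleton] at ha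
      rcases ha with rfl | rfl | rfl <;> simp [Finset.mem_filter, h1, h2, hwD]
    have hcard : ({(u, v1), (u, v2), (u, d (idx u + 1))} : Finset (V × V)).card = 3 := by
      rw [Finset.card_insert_of_notMem (by simp [hne, hne1]),
        Finset.card_insert_of_notMem (by simp [hne2]), Finset.card_singleton]
    have hle := Finset.card_le_card hsub
    have h2' : (D.filter (fun a => a.1 = u)).card = 2 := (hreg u).2
    omega
  have hMin : ∀ v u1 u2, (u1, v) ∈ D → (u1, v) ∉ Ham → (u2, v) ∈ D → (u2, v) ∉ Ham →
      u1 = u2 := by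
    intro v u1 u2 h1 h1n h2 h2n
    by_contra hne
    obtain ⟨j, hj, hjv⟩ := hexhead v
    have hwH : (d j, v) ∈ Ham := by
      have := hHam_mem j hj
      rwa [hjv] at this
    have hwD : (d j, v) ∈ D := hHamD hwH
    have hne1 : u1 ≠ d j := fun h => h1n (h ▸ hwH)
    have hne2 : u2 ≠ d j := fun h => h2n (h ▸ hwH)
    have hsub : ({(u1, v), (u2, v), (d j, v)} : Finset (V × V)) ⊆
        D.filter (fun a => a.2 = v) := by
      intro a ha
      simp only [Finset.mem_insert, Finset.mem_singleton] at ha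
      rcases ha with rfl | rfl | rfl <;> simp [Finset.mem_filter, h1, h2, hwD]
    have hcard : ({(u1, v), (u2, v), (d j, v)} : Finset (V × V)).card = 3 := by
      rw [Finset.card_insert_of_notMem (by simp [hne, hne1]),
        Finset.card_insert_of_notMem (by simp [hne2]), Finset.card_singleton]
    have hle := Finset.card_le_card hsub
    have h2' : (D.filter (fun a => a.2 = v)).card = 2 := (hreg v).1
    omega
  -- the decomposition
  set L : Finset ((V ⊕ V) × (V ⊕ V)) :=
    (Finset.univ.erase x).image (fun v => (Sum.inr v, Sum.inl v)) with hL_def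
  set F : Finset ((V ⊕ V) × (V ⊕ V)) :=
    Ham.image (fun a => (Sum.inl a.1, Sum.inr a.2)) ∪ L with hF_def
  set M : Finset ((V ⊕ V) × (V ⊕ V)) :=
    (D \ Ham).image (fun a => (Sum.inl a.1, Sum.inr a.2)) with hM_def
  have hFmem : ∀ a ∈ F, (∃ p ∈ Ham, a = (Sum.inl p.1, Sum.inr p.2)) ∨
      (∃ v, v ≠ x ∧ a = (Sum.inr v, Sum.inl v)) := by
    intro a ha
    rw [hF_def, Finset.mem_union] at ha
    rcases ha with h | h
    · rw [Finset.mem_image] at h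
      obtain ⟨p, hp, rfl⟩ := h
      exact Or.inl ⟨p, hp, rfl⟩
    · rw [hL_def, Finset.mem_image] at h
      obtain ⟨v, hv, rfl⟩ := h
      rw [Finset.mem_erase] at hv
      exact Or.inr ⟨v, hv.1, rfl⟩
  have hMmem : ∀ a ∈ M, ∃ p1 p2, (p1, p2) ∈ D ∧ (p1, p2) ∉ Ham ∧
      a = (Sum.inl p1, Sum.inr p2) := by
    intro a ha
    rw [hM_def, Finset.mem_image] at ha
    obtain ⟨⟨p1, p2⟩, hp, rfl⟩ := ha
    rw [Finset.mem_sdiff] at hp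
    exact ⟨p1, p2, hp.1, hp.2, rfl⟩
  refine ⟨F, M, ?_, ?_, ?_, ?_⟩
  · -- F ∪ M = D'
    have himg : Ham.image (fun a : V × V => ((Sum.inl a.1 : V ⊕ V), (Sum.inr a.2 : V ⊕ V))) ∪
        (D \ Ham).image (fun a : V × V => ((Sum.inl a.1 : V ⊕ V), (Sum.inr a.2 : V ⊕ V))) =
        D.image (fun a : V × V => ((Sum.inl a.1 : V ⊕ V), (Sum.inr a.2 : V ⊕ V))) := by
      rw [← Finset.image_union, Finset.union_sdiff_of_subset hHamD]
    rw [hF_def, hM_def, Finset.union_right_comm, himg, hD', hL_def]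
  · -- Disjoint
    rw [Finset.disjoint_left]
    intro a haF haM
    obtain ⟨p1, p2, hpD, hpN, rfl⟩ := hMmem a haM
    rcases hFmem _ haF with ⟨q, hq, heq⟩ | ⟨v, hv, heq⟩
    · have h1 : q.1 = p1 := Sum.inl_injective (congrArg Prod.fst heq).symm
      have h2 : q.2 = p2 := Sum.inr_injective (congrArg Prod.snd heq).symm
      apply hpN
      have : q = (p1, p2) := Prod.ext h1 h2
      rwa [this] at hq
    · have := congrArg Prod.fst heq
      simp at this
  · -- IsDLF F
    refine ⟨?_, ?_, ?_⟩
    · -- inDeg ≤ 1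
      intro w
      unfold inDeg
      apply Finset.card_le_one.mpr
      intro a ha b hb
      rw [Finset.mem_filter] at ha hb
      rcases hFmem a ha.1 with ⟨p, hp, rfl⟩ | ⟨v, hv, rfl⟩ <;>
        rcases hFmem b hb.1 with ⟨q, hq, rfl⟩ | ⟨v', hv', rfl⟩
      · have h2 : (Sum.inr p.2 : V ⊕ V) = Sum.inr q.2 := by
          have := ha.2.trans hb.2.symm
          simpa using this
        have hpq : p = q := hHam_head p hp q hq (Sum.inr_injective h2)
        rw [hpq]
      · exfalso
        have := ha.2.trans hb.2.symm
        simp at this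
      · exfalso
        have := ha.2.trans hb.2.symm
        simp at this
      · have h2 : v = v' := by
          have := ha.2.trans hb.2.symm
          simpa using this
        rw [h2]
    · -- outDeg ≤ 1
      intro w
      unfold outDeg
      apply Finset.card_le_one.mpr
      intro a ha b hb
      rw [Finset.mem_filter] at ha hb
      rcases hFmem a ha.1 with ⟨p, hp, rfl⟩ | ⟨v, hv, rfl⟩ <;>
        rcases hFmem b hb.1 with ⟨q, hq, rfl⟩ | ⟨v', hv', rfl⟩
      · have h1 : (Sum.inl p.1 : V ⊕ V) = Sum.inl q.1 := by
          have := ha.2.trans hb.2.symm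
          simpa using this
        have hpq : p = q := hHam_tail p hp q hq (Sum.inl_injective h1)
        rw [hpq]
      · exfalso
        have := ha.2.trans hb.2.symm
        simp at this
      · exfalso
        have := ha.2.trans hb.2.symm
        simp at this
      · have h2 : v = v' := by
          have := ha.2.trans hb.2.symm
          simpa using this
        rw [h2]
    · -- acyclic
      intro w0 hcyc
      set phi : V ⊕ V → ℕ :=
        Sum.elim (fun v => 2 * idx v)
          (fun v => if v = x then 2 * n - 1 else 2 * idx v - 1) with hphi_def
      have hstep : ∀ u w, (u, w) ∈ F → phi u < phi w := by
        intro u w huw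
        rcases hFmem _ huw with ⟨p, hp, heq⟩ | ⟨v, hv, heq⟩
        · rw [Prod.mk.injEq] at heq
          obtain ⟨rfl, rfl⟩ := heq
          rw [hHam_def, Finset.mem_image] at hp
          obtain ⟨j, hj, rfl⟩ := hp
          rw [Finset.mem_range] at hj
          simp only [hphi_def, Sum.elim_inl, Sum.elim_inr]
          rw [hidx_d j hj]
          by_cases hjn : j + 1 = n
          · rw [hjn, hdn, if_pos rfl]; omega
          · have hj1 : j + 1 < n := by omega
            have hnex : d (j + 1) ≠ x := by
              intro h
              have h1 := hidx_d (j + 1) hj1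
              rw [h, hidx_x] at h1
              omega
            rw [if_neg hnex, hidx_d (j + 1) hj1]
            omega
        · rw [Prod.mk.injEq] at heq
          obtain ⟨rfl, rfl⟩ := heq
          simp only [hphi_def, Sum.elim_inl, Sum.elim_inr]
          rw [if_neg hv]
          have := hidx_pos v hv
          omega
      have mono : ∀ a b, Relation.TransGen (fun u w => (u, w) ∈ F) a b →
          phi a < phi b := by
        intro a b h
        induction h with
        | single h => exact hstep _ _ h
        | tail _ h2 ih => exact lt_trans ih (hstep _ _ h2)
      exact absurd (mono _ _ hcyc) (lt_irrefl _)
  · -- IsDirectedMatching M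
    intro w
    rcases w with u | v
    · have hin : inDeg M (Sum.inl u) = 0 := by
        unfold inDeg
        rw [Finset.card_eq_zero, Finset.filter_eq_empty_iff]
        intro a ha
        obtain ⟨p1, p2, _, _, rfl⟩ := hMmem a ha
        simp
      have hout : outDeg M (Sum.inl u) ≤ 1 := by
        unfold outDeg
        apply Finset.card_le_one.mpr
        intro a ha b hb
        rw [Finset.mem_filter] at ha hb
        obtain ⟨p1, p2, hpD, hpN, rfl⟩ := hMmem a ha.1
        obtain ⟨q1, q2, hqD, hqN, rfl⟩ := hMmem b hb.1
        have h1 : p1 = u := by have := ha.2; simpa using this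
        have h2 : q1 = u := by have := hb.2; simpa using this
        obtain rfl : p1 = q1 := h1.trans h2.symm
        have h3 := hMout p1 p2 q2 hpD hpN hqD hqN
        rw [h3]
      omega
    · have hout : outDeg M (Sum.inr v) = 0 := by
        unfold outDeg
        rw [Finset.card_eq_zero, Finset.filter_eq_empty_iff]
        intro a ha
        obtain ⟨p1, p2, _, _, rfl⟩ := hMmem a ha
        simp
      have hin : inDeg M (Sum.inr v) ≤ 1 := by
        unfold inDeg
        apply Finset.card_le_one.mpr
        intro a ha b hb
        rw [Finset.mem_filter] at ha hb
        obtain ⟨p1, p2, hpD, hpN, rfl⟩ := hMmem a ha.1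
        obtain ⟨q1, q2, hqD, hqN, rfl⟩ := hMmem b hb.1
        have h1 : p2 = v := by have := ha.2; simpa using this
        have h2 : q2 = v := by have := hb.2; simpa using this
        obtain rfl : p2 = q2 := h1.trans h2.symm
        have h3 := hMin p2 p1 q1 hpD hpN hqD hqN
        rw [h3]
      omega
end

section
/- Let D be the 2-diregular splitting digraph D' as above (k=1 case): vertices v_+ and v_- for each v in V(D), arcs u_+ v_- for each arc uv of D, and arcs v_- v_+ for each v != x. If D' admits a decomposition into an unbounded directed linear forest F and a directed matching M, then the set C of arcs uv of D with u_+ v_- in F forms a spanning subdigraph of D in which every vertex has in-degree and out-degree exactly 1. -/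
open Finset

/-- Let `D` be a 2-diregular digraph, `x` a fixed vertex, and `D'` the
split digraph as in the `k = 1` construction. If `D'` decomposes into an (unbounded)
directed linear forest `F` and a directed matching `M`, then the set `C` of arcs `uv`
of `D` with `u₊ v₋ ∈ F` forms a spanning subdigraph of `D` in which every vertex has
in-degree and out-degree exactly 1. -/
theorem stmt16 {V : Type*} [Fintype V] [DecidableEq V]
    (D : Finset (V × V)) (hreg : ∀ v, inDeg D v = 2 ∧ outDeg D v = 2) (x : V)
    (D' : Finset ((V ⊕ V) × (V ⊕ V)))
    (hD' : D' = D.image (fun a => (Sum.inl a.1, Sum.inr a.2))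
        ∪ (Finset.univ.erase x).image (fun v => (Sum.inr v, Sum.inl v)))
    (F M : Finset ((V ⊕ V) × (V ⊕ V)))
    (hFM : F ∪ M = D') (hdisj : Disjoint F M)
    (hF : IsDLF F) (hM : IsDirectedMatching M)
    (C : Finset (V × V))
    (hC : C = D.filter (fun a => ((Sum.inl a.1 : V ⊕ V), (Sum.inr a.2 : V ⊕ V)) ∈ F)) :
    ∀ v, inDeg C v = 1 ∧ outDeg C v = 1 := by
  
  classical
  have hFsub : F ⊆ D' := hFM ▸ Finset.subset_union_left
  intro v
  set g : V × V → (V ⊕ V) × (V ⊕ V) := fun a => (Sum.inl a.1, Sum.inr a.2) with hgdef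
  have hg : Function.Injective g := by
    intro a b h
    simpa [hgdef, Prod.ext_iff] using h
  -- in-degree of inr v in D'
  have hinD' : D'.filter (fun b => b.2 = Sum.inr v) = (D.filter (fun a => a.2 = v)).image g := by
    ext ⟨b1, b2⟩
    simp only [hD', mem_filter, mem_union, mem_image, mem_erase, mem_univ, hgdef,
      Prod.mk.injEq]
    constructor
    · rintro ⟨h1 | ⟨w, hw, hw1, hw2⟩, h2⟩
      · obtain ⟨a, ha, ha1, ha2⟩ := h1
        subst ha1 ha2
        exact ⟨a, ⟨ha, by simpa using h2⟩, rfl, rfl⟩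
      · subst hw2; simp at h2
    · rintro ⟨a, ⟨ha, ha2⟩, h1, h2⟩
      exact ⟨Or.inl ⟨a, ha, h1, h2⟩, by simp [← h2, ha2]⟩
  have houtD' : D'.filter (fun b => b.1 = Sum.inl v) = (D.filter (fun a => a.1 = v)).image g := by
    ext ⟨b1, b2⟩
    simp only [hD', mem_filter, mem_union, mem_image, mem_erase, mem_univ, hgdef,
      Prod.mk.injEq]
    constructor
    · rintro ⟨h1 | ⟨w, hw, hw1, hw2⟩, h2⟩
      · obtain ⟨a, ha, ha1, ha2⟩ := h1
        subst ha1 ha2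
        exact ⟨a, ⟨ha, by simpa using h2⟩, rfl, rfl⟩
      · subst hw1; simp at h2
    · rintro ⟨a, ⟨ha, ha1⟩, h1, h2⟩
      exact ⟨Or.inl ⟨a, ha, h1, h2⟩, by simp [← h1, ha1]⟩
  have hin2 : inDeg D' (Sum.inr v) = 2 := by
    unfold inDeg
    rw [hinD', Finset.card_image_of_injective _ hg]
    exact (hreg v).1
  have hout2 : outDeg D' (Sum.inl v) = 2 := by
    unfold outDeg
    rw [houtD', Finset.card_image_of_injective _ hg]
    exact (hreg v).2
  -- split degrees
  have hsplitIn : inDeg F (Sum.inr v) + inDeg M (Sum.inr v) = 2 := by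
    rw [← hin2, ← hFM]
    unfold inDeg
    rw [filter_union, card_union_of_disjoint (hdisj.mono (filter_subset _ _) (filter_subset _ _))]
  have hsplitOut : outDeg F (Sum.inl v) + outDeg M (Sum.inl v) = 2 := by
    rw [← hout2, ← hFM]
    unfold outDeg
    rw [filter_union, card_union_of_disjoint (hdisj.mono (filter_subset _ _) (filter_subset _ _))]
  have hFin : inDeg F (Sum.inr v) = 1 := by
    have := hF.1 (Sum.inr v)
    have := hM (Sum.inr v)
    omega
  have hFout : outDeg F (Sum.inl v) = 1 := by
    have := hF.2.1 (Sum.inl v)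
    have := hM (Sum.inl v)
    omega
  -- relate C back to F
  have hCin : (C.filter (fun a => a.2 = v)).image g = F.filter (fun b => b.2 = Sum.inr v) := by
    ext ⟨b1, b2⟩
    simp only [hC, mem_image, mem_filter, hgdef, Prod.mk.injEq]
    constructor
    · rintro ⟨a, ⟨⟨ha, haF⟩, ha2⟩, h1, h2⟩
      subst h1 h2
      exact ⟨haF, by simp [ha2]⟩
    · rintro ⟨hbF, hb2⟩
      have hbD' : (b1, b2) ∈ D'.filter (fun b => b.2 = Sum.inr v) :=
        mem_filter.2 ⟨hFsub hbF, hb2⟩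
      rw [hinD'] at hbD'
      simp only [mem_image, mem_filter, hgdef, Prod.mk.injEq] at hbD'
      obtain ⟨a, ⟨ha, ha2⟩, h1, h2⟩ := hbD'
      exact ⟨a, ⟨⟨ha, by simp [h1, h2, hbF]⟩, ha2⟩, h1, h2⟩
  have hCout : (C.filter (fun a => a.1 = v)).image g = F.filter (fun b => b.1 = Sum.inl v) := by
    ext ⟨b1, b2⟩
    simp only [hC, mem_image, mem_filter, hgdef, Prod.mk.injEq]
    constructor
    · rintro ⟨a, ⟨⟨ha, haF⟩, ha1⟩, h1, h2⟩
      subst h1 h2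
      exact ⟨haF, by simp [ha1]⟩
    · rintro ⟨hbF, hb1⟩
      have hbD' : (b1, b2) ∈ D'.filter (fun b => b.1 = Sum.inl v) :=
        mem_filter.2 ⟨hFsub hbF, hb1⟩
      rw [houtD'] at hbD'
      simp only [mem_image, mem_filter, hgdef, Prod.mk.injEq] at hbD'
      obtain ⟨a, ⟨ha, ha1⟩, h1, h2⟩ := hbD'
      exact ⟨a, ⟨⟨ha, by simp [h1, h2, hbF]⟩, ha1⟩, h1, h2⟩
  constructor
  · have h := congrArg Finset.card hCin
    rw [Finset.card_image_of_injective _ hg] at h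
    unfold inDeg at hFin ⊢
    omega
  · have h := congrArg Finset.card hCout
    rw [Finset.card_image_of_injective _ hg] at h
    unfold outDeg at hFout ⊢
    omega
end

section
/- In every decomposition of the digraph D — with vertices t_1,t_2,t_3,v_1,...,v_5 and arcs v_1t_1, v_2t_2, t_3v_3, v_4v_1, v_4v_2, v_5v_3, v_5v_4 — into a 2-bounded directed linear forest F and another 2-bounded directed linear forest F', it is not the case that all three arcs a_1 = v_1t_1, a_2 = v_2t_2, a_3 = t_3v_3 lie in the same part. -/
open Finset

lemma outDeg_two {F : Finset (Fin 8 × Fin 8)} {u a b : Fin 8}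
    (h1 : (u, a) ∈ F) (h2 : (u, b) ∈ F) (hab : a ≠ b) (h : outDeg F u ≤ 1) : False := by
  have hsub : ({(u, a), (u, b)} : Finset (Fin 8 × Fin 8)) ⊆ F.filter (fun p => p.1 = u) := by
    intro x hx
    simp only [Finset.mem_insert, Finset.mem_singleton] at hx
    rcases hx with rfl | rfl <;> simp [h1, h2]
  have hcard := Finset.card_le_card hsub
  rw [Finset.card_pair (by simpa using hab)] at hcard
  unfold outDeg at h
  omega

lemma inDeg_two_s19 {F : Finset (Fin 8 × Fin 8)} {u a b : Fin 8}
    (h1 : (a, u) ∈ F) (h2 : (b, u) ∈ F) (hab : a ≠ b) (h : inDeg F u ≤ 1) : False := by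
  have hsub : ({(a, u), (b, u)} : Finset (Fin 8 × Fin 8)) ⊆ F.filter (fun p => p.2 = u) := by
    intro x hx
    simp only [Finset.mem_insert, Finset.mem_singleton] at hx
    rcases hx with rfl | rfl <;> simp [h1, h2]
  have hcard := Finset.card_le_card hsub
  rw [Finset.card_pair (by simpa using hab)] at hcard
  unfold inDeg at h
  omega

lemma walk3 {F : Finset (Fin 8 × Fin 8)} {a b c d : Fin 8}
    (h1 : (a, b) ∈ F) (h2 : (b, c) ∈ F) (h3 : (c, d) ∈ F)
    (h : ¬ HasWalkOfLength F 3) : False := by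
  apply h
  refine ⟨fun i => if i = 0 then a else if i = 1 then b else if i = 2 then c else d, ?_⟩
  intro i hi
  interval_cases i <;> simpa using ‹_›

lemma auxkey {F F' : Finset (Fin 8 × Fin 8)}
    (hF : IsBoundedDLF F 2) (hF' : IsBoundedDLF F' 2)
    (m63 : ((6 : Fin 8), (3 : Fin 8)) ∈ F ∨ ((6 : Fin 8), (3 : Fin 8)) ∈ F')
    (m64 : ((6 : Fin 8), (4 : Fin 8)) ∈ F ∨ ((6 : Fin 8), (4 : Fin 8)) ∈ F')
    (m75 : ((7 : Fin 8), (5 : Fin 8)) ∈ F ∨ ((7 : Fin 8), (5 : Fin 8)) ∈ F')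
    (m76 : ((7 : Fin 8), (6 : Fin 8)) ∈ F ∨ ((7 : Fin 8), (6 : Fin 8)) ∈ F')
    (h1 : ((3 : Fin 8), (0 : Fin 8)) ∈ F) (h2 : ((4 : Fin 8), (1 : Fin 8)) ∈ F)
    (h3 : ((2 : Fin 8), (5 : Fin 8)) ∈ F) : False := by
  -- F contains one of (6,3),(6,4)
  have h6 : ((6 : Fin 8), (3 : Fin 8)) ∈ F ∨ ((6 : Fin 8), (4 : Fin 8)) ∈ F := by
    rcases m63 with h | h
    · exact Or.inl h
    · rcases m64 with h' | h'
      · exact Or.inr h'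
      · exact absurd (outDeg_two h h' (by decide) (hF'.1.2.1 6)) (fun x => x)
  have h7 : ((7 : Fin 8), (5 : Fin 8)) ∈ F ∨ ((7 : Fin 8), (6 : Fin 8)) ∈ F := by
    rcases m75 with h | h
    · exact Or.inl h
    · rcases m76 with h' | h'
      · exact Or.inr h'
      · exact absurd (outDeg_two h h' (by decide) (hF'.1.2.1 7)) (fun x => x)
  rcases h7 with h75 | h76
  · -- inDeg of 5 in F is 2
    exact inDeg_two_s19 h3 h75 (by decide) (hF.1.1 5)
  · rcases h6 with h63 | h64
    · exact walk3 h76 h63 h1 hF.2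
    · exact walk3 h76 h64 h2 hF.2

/-- In the (2,2)-clause gadget with vertices
`t₁,t₂,t₃,v₁,v₂,v₃,v₄,v₅ = 0,1,2,3,4,5,6,7` and arcs
`v₁t₁, v₂t₂, t₃v₃, v₄v₁, v₄v₂, v₅v₃, v₅v₄`, in every decomposition into two
2-bounded directed linear forests `(F, F')` it is not the case that all three arcs
`a₁ = v₁t₁`, `a₂ = v₂t₂`, `a₃ = t₃v₃` lie in the same part. -/
theorem stmt19 (D : Finset (Fin 8 × Fin 8))
    (hD : D = {(3, 0), (4, 1), (2, 5), (6, 3), (6, 4), (7, 5), (7, 6)}) :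
    ∀ F F' : Finset (Fin 8 × Fin 8), F ∪ F' = D → Disjoint F F' →
      IsBoundedDLF F 2 → IsBoundedDLF F' 2 →
      ¬(((3 : Fin 8), (0 : Fin 8)) ∈ F ∧ ((4 : Fin 8), (1 : Fin 8)) ∈ F ∧
          ((2 : Fin 8), (5 : Fin 8)) ∈ F) ∧
      ¬(((3 : Fin 8), (0 : Fin 8)) ∈ F' ∧ ((4 : Fin 8), (1 : Fin 8)) ∈ F' ∧
          ((2 : Fin 8), (5 : Fin 8)) ∈ F') := by
  intro F F' hU hdisj hF hF'
  have mem : ∀ a ∈ ({(3, 0), (4, 1), (2, 5), (6, 3), (6, 4), (7, 5), (7, 6)} :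
      Finset (Fin 8 × Fin 8)), a ∈ F ∨ a ∈ F' := by
    intro a ha
    have : a ∈ F ∪ F' := by rw [hU, hD]; exact ha
    exact Finset.mem_union.mp this
  constructor
  · rintro ⟨h1, h2, h3⟩
    exact auxkey hF hF' (mem _ (by decide)) (mem _ (by decide)) (mem _ (by decide))
      (mem _ (by decide)) h1 h2 h3
  · rintro ⟨h1, h2, h3⟩
    exact auxkey hF' hF ((mem _ (by decide)).symm) ((mem _ (by decide)).symm)
      ((mem _ (by decide)).symm) ((mem _ (by decide)).symm) h1 h2 h3
end
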